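/- arXiv:1708.04713 — 5 statements merged into one kernel-verified Lean document; each statement's English description precedes it below -/
import Mathlib

section
/- Let f ∈ ℤ[x] be nonconstant with not all coefficients divisible by p. Then the number of a ∈ {0, 1, ..., p²−1} with f(a) ≡ 0 mod p² equals n₁ + p·n₂, where n₁ is the number of simple roots r ∈ ℤ/pℤ of f mod p, and n₂ is the number of degenerate roots r ∈ {0,...,p−1} of f mod p (i.e., f(r) ≡ f'(r) ≡ 0 mod p) that additionally satisfy f(r) ≡ 0 mod p². -/
/-!
Write `a = r + p t` with `r, t < p`. Taylor expansion gives
`f (r + p t) ≡ f r + p t f'(r) (mod p²)`. If `r` is not a root mod `p` there is no lift; if it is a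
simple root, `f'(r)` is a unit mod `p` and the condition is a linear equation for `t` mod `p`, with
exactly one solution; if it is degenerate, the condition reduces to `p² ∣ f r`, independently of
`t`, so there are `p` lifts or none.
-/

open Polynomial Finset

namespace Polynomial

theorem X_sub_C_sq_dvd_iff {R : Type*} [CommRing R] {g : R[X]} {r : R} :
    (X - C r) ^ 2 ∣ g ↔ g.IsRoot r ∧ g.derivative.IsRoot r := by
  constructor
  · rintro ⟨h, rfl⟩
    simp [IsRoot, derivative_mul, derivative_pow]
  · rintro ⟨hg, hg'⟩
    obtain ⟨h, rfl⟩ := dvd_iff_isRoot.mpr hg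
    have hh : h.IsRoot r := by simpa [IsRoot, derivative_mul] using hg'
    obtain ⟨k, rfl⟩ := dvd_iff_isRoot.mpr hh
    exact ⟨k, by ring⟩

theorem sq_dvd_eval_add_mul_iff {R : Type*} [CommRing R] (f : R[X]) (x q t : R) :
    q ^ 2 ∣ f.eval (x + q * t) ↔ q ^ 2 ∣ f.eval x + q * t * f.derivative.eval x := by
  obtain ⟨k, hk⟩ := f.binomExpansion x (q * t)
  rw [hk, show f.eval x + f.derivative.eval x * (q * t) + k * (q * t) ^ 2
      = f.eval x + q * t * f.derivative.eval x + q ^ 2 * (k * t ^ 2) by ring]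
  exact dvd_add_left (dvd_mul_right _ _)

theorem isRoot_map_intCast_iff {n : ℕ} (f : ℤ[X]) (a : ℤ) :
    (f.map (Int.castRingHom (ZMod n))).IsRoot (a : ZMod n) ↔ (n : ℤ) ∣ f.eval a := by
  rw [IsRoot, eval_intCast_map, Int.cast_id, eq_intCast, ZMod.intCast_zmod_eq_zero_iff_dvd]

end Polynomial

theorem Finset.sum_range_mul {M : Type*} [AddCommMonoid M] (g : ℕ → M) (n m : ℕ) :
    ∑ a ∈ range (n * m), g a = ∑ r ∈ range n, ∑ t ∈ range m, g (r + n * t) := by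
  rw [sum_comm]
  induction m with
  | zero => simp
  | succ m ih =>
    rw [Nat.mul_succ, sum_range_add, ih, sum_range_succ]
    simp only [add_comm]

theorem ZMod.card_filter_range {n : ℕ} [NeZero n] (P : ZMod n → Prop) [DecidablePred P] :
    #{t ∈ range n | P ((t : ℕ) : ZMod n)} = #{x : ZMod n | P x} := by
  refine card_nbij' (fun t => (t : ZMod n)) ZMod.val ?_ ?_ ?_ ?_
  · intro t ht
    simpa using (mem_filter.mp ht).2
  · intro x hx
    simpa [ZMod.natCast_zmod_val, ZMod.val_lt] using hx
  · intro t ht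
    exact ZMod.val_cast_of_lt (mem_range.mp (mem_filter.mp ht).1)
  · intro x _
    exact ZMod.natCast_zmod_val x

def liftsModSq (p : ℕ) (f : ℤ[X]) (r : ℤ) : Finset ℕ :=
  {t ∈ range p | (p : ℤ) ^ 2 ∣ f.eval (r + p * t)}

section liftsModSq

variable {p : ℕ} {f : ℤ[X]} {r : ℤ}

theorem liftsModSq_eq_empty (hr : ¬ (p : ℤ) ∣ f.eval r) : liftsModSq p f r = ∅ := by
  refine filter_false_of_mem fun t _ ht => hr ?_
  rw [sq_dvd_eval_add_mul_iff] at ht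
  have hp : (p : ℤ) ∣ f.eval r + p * t * f.derivative.eval r :=
    (dvd_pow_self _ two_ne_zero).trans ht
  exact (dvd_add_left (dvd_mul_of_dvd_left (dvd_mul_right _ _) _)).mp hp

theorem card_liftsModSq_of_dvd_derivative (hr' : (p : ℤ) ∣ f.derivative.eval r) :
    #(liftsModSq p f r) = if (p : ℤ) ^ 2 ∣ f.eval r then p else 0 := by
  have hlift : ∀ t : ℕ, (p : ℤ) ^ 2 ∣ f.eval (r + p * t) ↔ (p : ℤ) ^ 2 ∣ f.eval r := fun t => by
    rw [sq_dvd_eval_add_mul_iff, pow_two]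
    exact dvd_add_left (mul_dvd_mul (dvd_mul_right _ _) hr')
  unfold liftsModSq
  simp_rw [hlift]
  split_ifs with h <;> simp [h]

theorem card_liftsModSq_of_simple [Fact p.Prime] (hr : (p : ℤ) ∣ f.eval r)
    (hr' : ¬ (p : ℤ) ∣ f.derivative.eval r) : #(liftsModSq p f r) = 1 := by
  obtain ⟨c, hc⟩ := hr
  set d : ZMod p := ((f.derivative.eval r : ℤ) : ZMod p)
  have hd : d ≠ 0 := mt (ZMod.intCast_zmod_eq_zero_iff_dvd _ _).mp hr'
  have hlift : ∀ t : ℕ, (p : ℤ) ^ 2 ∣ f.eval (r + p * t) ↔ (t : ZMod p) = -c / d := fun t => by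
    rw [sq_dvd_eval_add_mul_iff, hc, pow_two, mul_assoc, ← mul_add,
      mul_dvd_mul_iff_left (by exact_mod_cast (Fact.out : p.Prime).ne_zero),
      ← ZMod.intCast_zmod_eq_zero_iff_dvd, eq_div_iff hd, eq_neg_iff_add_eq_zero]
    push_cast
    rw [add_comm]
  unfold liftsModSq
  simp_rw [hlift]
  rw [ZMod.card_filter_range (· = -(c : ZMod p) / d), filter_eq', if_pos (mem_univ _),
    card_singleton]

theorem card_liftsModSq [Fact p.Prime] : #(liftsModSq p f r) =
    (if (p : ℤ) ∣ f.eval r ∧ ¬ (p : ℤ) ∣ f.derivative.eval r then 1 else 0) +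
      p * (if (p : ℤ) ∣ f.eval r ∧ (p : ℤ) ∣ f.derivative.eval r ∧ (p : ℤ) ^ 2 ∣ f.eval r
        then 1 else 0) := by
  by_cases hr : (p : ℤ) ∣ f.eval r
  · by_cases hr' : (p : ℤ) ∣ f.derivative.eval r
    · rw [card_liftsModSq_of_dvd_derivative hr']
      split_ifs <;> simp_all
    · rw [card_liftsModSq_of_simple hr hr']
      simp [hr, hr']
  · simp [liftsModSq_eq_empty hr, hr]

end liftsModSq

theorem ncard_simple_roots_map_intCast (p : ℕ) [NeZero p] (f : ℤ[X]) :
    {r : ZMod p | (X - C r) ∣ f.map (Int.castRingHom (ZMod p)) ∧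
        ¬ (X - C r) ^ 2 ∣ f.map (Int.castRingHom (ZMod p))}.ncard =
      #{r ∈ range p | (p : ℤ) ∣ f.eval ((r : ℕ) : ℤ) ∧
        ¬ (p : ℤ) ∣ f.derivative.eval ((r : ℕ) : ℤ)} := by
  classical
  set g := f.map (Int.castRingHom (ZMod p)) with hg
  have hroots : {r : ZMod p | (X - C r) ∣ g ∧ ¬ (X - C r) ^ 2 ∣ g} =
      ↑({r | g.IsRoot r ∧ ¬ g.derivative.IsRoot r} : Finset (ZMod p)) := by
    ext r
    simp only [Set.mem_ofPred_eq, coe_filter, mem_univ, true_and, dvd_iff_isRoot,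
      X_sub_C_sq_dvd_iff]
    tauto
  rw [hroots, Set.ncard_coe_finset, ← ZMod.card_filter_range]
  congr 1
  refine filter_congr fun r _ => ?_
  rw [hg, derivative_map, ← Int.cast_natCast, isRoot_map_intCast_iff, isRoot_map_intCast_iff]

theorem stmt7_general (p : ℕ) (hp : p.Prime) (f : Polynomial ℤ) :
    ((Finset.range (p ^ 2)).filter (fun a : ℕ => (p : ℤ) ^ 2 ∣ f.eval (a : ℤ))).card =
      {r : ZMod p | (X - C r) ∣ f.map (Int.castRingHom (ZMod p)) ∧
          ¬ (X - C r) ^ 2 ∣ f.map (Int.castRingHom (ZMod p))}.ncard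
        + p * ((Finset.range p).filter (fun r : ℕ =>
            (p : ℤ) ∣ f.eval (r : ℤ) ∧ (p : ℤ) ∣ f.derivative.eval (r : ℤ) ∧
              (p : ℤ) ^ 2 ∣ f.eval (r : ℤ))).card := by
  have : Fact p.Prime := ⟨hp⟩
  rw [ncard_simple_roots_map_intCast, card_filter, card_filter, card_filter, pow_two,
    sum_range_mul, mul_sum, ← sum_add_distrib]
  refine sum_congr rfl fun r _ => ?_
  rw [← card_filter]
  push_cast
  exact card_liftsModSq

theorem stmt7 (p : ℕ) (hp : p.Prime) (f : Polynomial ℤ)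
    (hf : 0 < f.natDegree)
    (hcoeff : ¬ ∀ n, (p : ℤ) ∣ f.coeff n) :
    ((Finset.range (p ^ 2)).filter (fun a : ℕ => (p : ℤ) ^ 2 ∣ f.eval (a : ℤ))).card =
      {r : ZMod p | (X - C r) ∣ f.map (Int.castRingHom (ZMod p)) ∧
          ¬ (X - C r) ^ 2 ∣ f.map (Int.castRingHom (ZMod p))}.ncard
        + p * ((Finset.range p).filter (fun r : ℕ =>
            (p : ℤ) ∣ f.eval (r : ℤ) ∧ (p : ℤ) ∣ f.derivative.eval (r : ℤ) ∧
              (p : ℤ) ^ 2 ∣ f.eval (r : ℤ))).card :=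
  stmt7_general p hp f
end

section
/- Let f ∈ ℤ[x] be nonconstant, and suppose the reduction of f mod p factors as f₁·f₂²·...·f_ℓ^ℓ·g with fᵢ monic separable pairwise coprime products of linear factors and g rootless over ℤ/pℤ. Let ℒᵢ ∈ ℤ[x] be the lift of fᵢ with coefficients in {0,...,p−1} (as a product of lifted linear factors), g̃ the analogous lift of g, and t := reduction mod p of (1/p)(f − g̃·∏ℒᵢ^i). For r ∈ {0,...,p−1} a degenerate root of f mod p (so (x−r̄) divides f₂···f_ℓ), one has f(r) ≡ 0 mod p² if and only if t(r̄) = 0 in ℤ/pℤ. -/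
/-!
Reducing the defining identity `f = G ∏ Lᵢ^i + p T` at `r`: a degenerate root `r̄` is a root of
some `Fᵢ` with `i ≥ 2`, so `p ∣ Lᵢ(r)` and `p² ∣ G(r) ∏ Lⱼ(r)^j`. Hence `p² ∣ f(r)` exactly when
`p² ∣ p T(r)`, i.e. when `p ∣ T(r)`.
-/

open Polynomial Finset

theorem ZMod.eval_map_intCast_eq_zero_iff (n : ℕ) (P : ℤ[X]) (r : ℤ) :
    (P.map (Int.castRingHom (ZMod n))).eval (r : ZMod n) = 0 ↔ (n : ℤ) ∣ P.eval r := by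
  rw [eval_intCast_map, Int.cast_id, eq_intCast, ZMod.intCast_zmod_eq_zero_iff_dvd]

theorem sq_dvd_add_mul_iff {R : Type*} [CommRing R] [IsDomain R] {p b t : R} (hp : p ≠ 0)
    (hb : p ^ 2 ∣ b) : p ^ 2 ∣ b + p * t ↔ p ∣ t := by
  rw [dvd_add_right hb, sq, mul_dvd_mul_iff_left hp]

theorem exists_isRoot_of_X_sub_C_dvd_prod {K ι : Type*} [Field K] {s : Finset ι}
    {F : ι → K[X]} {a : K} (h : X - C a ∣ ∏ i ∈ s, F i) : ∃ i ∈ s, (F i).IsRoot a := by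
  rw [dvd_iff_isRoot, IsRoot, eval_prod, prod_eq_zero_iff] at h
  exact h

theorem sq_dvd_eval_prod_pow {R : Type*} [CommRing R] {s : Finset ℕ} {Q : ℕ → R[X]}
    {p r : R} {i : ℕ} (hi : i ∈ s) (hi2 : 2 ≤ i) (hQ : p ∣ (Q i).eval r) :
    p ^ 2 ∣ (∏ j ∈ s, Q j ^ j).eval r := by
  rw [eval_prod]
  calc p ^ 2 ∣ (Q i).eval r ^ i := (pow_dvd_pow_of_dvd hQ 2).trans (pow_dvd_pow _ hi2)
    _ = (Q i ^ i).eval r := (eval_pow _).symm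
    _ ∣ ∏ j ∈ s, (Q j ^ j).eval r := dvd_prod_of_mem _ hi

theorem stmt13_general (p : ℕ) [Fact p.Prime] (f : Polynomial ℤ)
    (ℓ : ℕ) (F : ℕ → Polynomial (ZMod p))
    (L : ℕ → Polynomial ℤ) (G : Polynomial ℤ)
    (hL : ∀ i ∈ Finset.Icc 1 ℓ, (L i).map (Int.castRingHom (ZMod p)) = F i)
    (T : Polynomial ℤ)
    (hT : f - G * ∏ i ∈ Finset.Icc 1 ℓ, L i ^ i = C (p : ℤ) * T)
    (r : ℤ)
    (hdeg : (X - C ((r : ℤ) : ZMod p)) ∣ ∏ i ∈ Finset.Icc 2 ℓ, F i) :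
    (p : ℤ) ^ 2 ∣ f.eval r ↔
      (T.map (Int.castRingHom (ZMod p))).eval ((r : ℤ) : ZMod p) = 0 := by
  obtain ⟨i, hi, hFi⟩ := exists_isRoot_of_X_sub_C_dvd_prod hdeg
  have hi1 : i ∈ Icc 1 ℓ := Icc_subset_Icc_left one_le_two hi
  have hLi : (p : ℤ) ∣ (L i).eval r := by
    rw [← ZMod.eval_map_intCast_eq_zero_iff, hL i hi1]
    exact hFi
  have hprod : (p : ℤ) ^ 2 ∣ (G * ∏ j ∈ Icc 1 ℓ, L j ^ j).eval r := by
    rw [eval_mul]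
    exact (sq_dvd_eval_prod_pow hi1 (mem_Icc.mp hi).1 hLi).mul_left _
  have hf : f.eval r = (G * ∏ j ∈ Icc 1 ℓ, L j ^ j).eval r + p * T.eval r := by
    rw [← eval_C_mul, ← hT, eval_sub]
    ring
  rw [hf, sq_dvd_add_mul_iff (by exact_mod_cast (Fact.out : p.Prime).ne_zero) hprod,
    ZMod.eval_map_intCast_eq_zero_iff]

theorem stmt13 (p : ℕ) [Fact p.Prime] (f : Polynomial ℤ) (hf : 0 < f.natDegree)
    (ℓ : ℕ) (F : ℕ → Polynomial (ZMod p)) (g : Polynomial (ZMod p))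
    (hfac : f.map (Int.castRingHom (ZMod p)) = (∏ i ∈ Finset.Icc 1 ℓ, F i ^ i) * g)
    (hmonic : ∀ i ∈ Finset.Icc 1 ℓ, (F i).Monic)
    (hsep : ∀ i ∈ Finset.Icc 1 ℓ, Squarefree (F i))
    (hsplit : ∀ i ∈ Finset.Icc 1 ℓ, ((F i).roots.card : ℕ) = (F i).natDegree)
    (hcop : ∀ i ∈ Finset.Icc 1 ℓ, ∀ j ∈ Finset.Icc 1 ℓ, i ≠ j → IsCoprime (F i) (F j))
    (hg : ∀ r : ZMod p, g.eval r ≠ 0)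
    (L : ℕ → Polynomial ℤ) (G : Polynomial ℤ)
    (hL : ∀ i ∈ Finset.Icc 1 ℓ, (L i).map (Int.castRingHom (ZMod p)) = F i)
    (hLcoeff : ∀ i ∈ Finset.Icc 1 ℓ, ∀ n, 0 ≤ (L i).coeff n ∧ (L i).coeff n ≤ (p : ℤ) - 1)
    (hG : G.map (Int.castRingHom (ZMod p)) = g)
    (hGcoeff : ∀ n, 0 ≤ G.coeff n ∧ G.coeff n ≤ (p : ℤ) - 1)
    (T : Polynomial ℤ)
    (hT : f - G * ∏ i ∈ Finset.Icc 1 ℓ, L i ^ i = C (p : ℤ) * T)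
    (r : ℤ) (hr0 : 0 ≤ r) (hr1 : r ≤ (p : ℤ) - 1)
    (hroot : (p : ℤ) ∣ f.eval r) (hder : (p : ℤ) ∣ f.derivative.eval r)
    (hdeg : (X - C ((r : ℤ) : ZMod p)) ∣ ∏ i ∈ Finset.Icc 2 ℓ, F i) :
    (p : ℤ) ^ 2 ∣ f.eval r ↔
      (T.map (Int.castRingHom (ZMod p))).eval ((r : ℤ) : ZMod p) = 0 :=
  stmt13_general p f ℓ F L G hL T hT r hdeg
end

section
/- Let f ∈ ℤ[x] be nonconstant with the setup of Definition 1.2: reduction h₁ = f₁f₂²···f_ℓ^ℓ·g mod p, lifts ℒᵢ ∈ ℤ[x] of fᵢ as products of lifted linear factors, t := π_p[(1/p)(f − g̃·∏ℒᵢ^i)], and h₂ := gcd(f₂···f_ℓ, t). Then #{a ∈ {0,...,p²−1} : f(a) ≡ 0 mod p²} = deg(f₁) + p·deg(h₂). -/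
/-!
Write `a = r + p s` with `r, s < p`. Taylor expansion gives `f (r + p s) ≡ f r + p s f' r (mod p²)`,
so above a residue `r` there are no solutions `s` unless `r` is a root of `h₁`, exactly one if it is
a simple root (Hensel), and `p` or none if it is a multiple root, according as `p² ∣ f r`.
The roots of `f₁` are simple roots of `h₁` and those of `f₂ ⋯ f_ℓ` multiple ones; at the latter
some `ℒⱼ r` with `j ≥ 2` is divisible by `p`, so `f r ≡ p t r (mod p²)` and `p² ∣ f r` exactly
when `r` is a root of `t` mod `p`. As `f₁` and `f₂ ⋯ f_ℓ` split with simple roots, the roots of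
`f₁` and of `h₂ = gcd (f₂ ⋯ f_ℓ, t)` number `deg f₁` and `deg h₂`.
-/

open Polynomial Finset

lemma sum_range_natCast_eq_sum_zmod {M : Type*} [AddCommMonoid M] (n : ℕ) [NeZero n]
    (φ : ZMod n → M) : ∑ r ∈ range n, φ r = ∑ x, φ x :=
  sum_nbij' (fun r => (r : ZMod n)) ZMod.val (fun _ _ => mem_univ _)
    (fun x _ => mem_range.mpr x.val_lt) (fun _ hr => ZMod.val_natCast_of_lt (mem_range.mp hr))
    (fun x _ => ZMod.natCast_zmod_val x) (fun _ _ => rfl)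

lemma card_filter_range_natCast (n : ℕ) [NeZero n] (Q : ZMod n → Prop) [DecidablePred Q] :
    #{s ∈ range n | Q ((s : ℕ) : ZMod n)} = #{x | Q x} := by
  simp only [card_filter]
  exact sum_range_natCast_eq_sum_zmod n (fun x => if Q x then 1 else 0)

lemma card_filter_range_sq (n : ℕ) (P : ℕ → Prop) [DecidablePred P] :
    #{a ∈ range (n ^ 2) | P a} = ∑ r ∈ range n, #{s ∈ range n | P (r + n * s)} := by
  rcases n.eq_zero_or_pos with rfl | hn
  · simp
  simp only [card_filter]
  rw [← sum_product' (f := fun r s => if P (r + n * s) then 1 else 0)]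
  simp only [← card_filter]
  refine card_nbij' (fun a => (a % n, a / n)) (fun rs => rs.1 + n * rs.2) ?_ ?_ ?_ ?_
  · intro a ha
    simp only [coe_filter, mem_range, Set.mem_ofPred_eq, mem_product] at ha ⊢
    refine ⟨⟨Nat.mod_lt _ hn, Nat.div_lt_of_lt_mul (by rw [← pow_two]; exact ha.1)⟩, ?_⟩
    rw [Nat.mod_add_div]; exact ha.2
  · rintro ⟨r, s⟩ h
    simp only [coe_filter, mem_range, Set.mem_ofPred_eq, mem_product] at h ⊢
    refine ⟨?_, h.2⟩
    nlinarith
  · intro a _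
    exact Nat.mod_add_div a n
  · rintro ⟨r, s⟩ h
    simp only [coe_filter, mem_range, mem_product] at h
    simp [Nat.add_mul_div_left _ _ hn, Nat.add_mul_mod_self_left, Nat.mod_eq_of_lt h.1.1,
      Nat.div_eq_of_lt h.1.1]

lemma card_filter_eval_eq_zero {K : Type*} [Field K] [Fintype K] [DecidableEq K] {q : K[X]}
    (hsep : q.Separable) (hsplit : q.Splits) : #{x | q.eval x = 0} = q.natDegree := by
  have : ({x | q.eval x = 0} : Finset K) = q.roots.toFinset := by
    ext x; simp [mem_roots hsep.ne_zero]
  rw [this, Multiset.toFinset_card_of_nodup (nodup_roots hsep), hsplit.natDegree_eq_card_roots]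

def liftCount (p : ℕ) (f : ℤ[X]) (r : ℤ) : ℕ :=
  #{s ∈ range p | (p : ℤ) ^ 2 ∣ f.eval (r + p * (s : ℕ))}

section Hensel

variable {p : ℕ} {f : ℤ[X]} {r : ℤ}

lemma intCast_dvd_eval_iff (p : ℕ) (q : ℤ[X]) (a : ℤ) :
    (p : ℤ) ∣ q.eval a ↔ (q.map (Int.castRingHom (ZMod p))).eval (a : ZMod p) = 0 := by
  rw [eval_intCast_map, eq_intCast, ZMod.intCast_zmod_eq_zero_iff_dvd, Int.cast_id]

lemma liftCount_eq_zero (h : (f.map (Int.castRingHom (ZMod p))).eval (r : ZMod p) ≠ 0) :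
    liftCount p f r = 0 := by
  refine card_eq_zero.mpr (filter_false_of_mem fun s _ hs => h ((intCast_dvd_eval_iff p f r).mp ?_))
  have hlift : (p : ℤ) ∣ f.eval (r + p * s) := (dvd_pow_self _ two_ne_zero).trans hs
  have hdiff : (p : ℤ) ∣ f.eval (r + p * s) - f.eval r :=
    (dvd_mul_right _ _).trans (by simpa using sub_dvd_eval_sub (r + p * s) r f)
  exact (dvd_sub_right hlift).mp hdiff

lemma liftCount_eq_one [Fact p.Prime]
    (h : (f.map (Int.castRingHom (ZMod p))).eval (r : ZMod p) = 0)
    (hd : (derivative (f.map (Int.castRingHom (ZMod p)))).eval (r : ZMod p) ≠ 0) :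
    liftCount p f r = 1 := by
  obtain ⟨m, hm⟩ := (intCast_dvd_eval_iff p f r).mpr h
  set d := f.derivative.eval r
  have hp : (p : ℤ) ≠ 0 := by exact_mod_cast (Fact.out : p.Prime).ne_zero
  have hd' : (d : ZMod p) ≠ 0 := by rwa [derivative_map, eval_intCast_map, eq_intCast] at hd
  have hlift : ∀ s : ℕ, (p : ℤ) ^ 2 ∣ f.eval (r + p * s) ↔ (s : ZMod p) = -m / d := by
    intro s
    obtain ⟨k, hk⟩ := f.binomExpansion r (p * s)
    rw [hk, hm, show (p : ℤ) * m + d * (p * s) + k * (p * s) ^ 2 = p * (m + d * s + p * (k * s ^ 2))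
      by ring, pow_two, mul_dvd_mul_iff_left hp, dvd_add_left (dvd_mul_right _ _),
      ← ZMod.intCast_zmod_eq_zero_iff_dvd, eq_div_iff hd']
    push_cast
    constructor <;> intro h <;> linear_combination h
  rw [liftCount, filter_congr fun s _ => hlift s, card_filter_range_natCast p (· = -m / d),
    filter_eq', if_pos (mem_univ _), card_singleton]

lemma liftCount_of_eval_derivative_eq_zero
    (hd : (derivative (f.map (Int.castRingHom (ZMod p)))).eval (r : ZMod p) = 0) :
    liftCount p f r = if (p : ℤ) ^ 2 ∣ f.eval r then p else 0 := by
  obtain ⟨e, he⟩ := (intCast_dvd_eval_iff p _ r).mpr (by rwa [← derivative_map])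
  have hlift : ∀ s : ℕ, (p : ℤ) ^ 2 ∣ f.eval (r + p * s) ↔ (p : ℤ) ^ 2 ∣ f.eval r := by
    intro s
    obtain ⟨k, hk⟩ := f.binomExpansion r (p * s)
    rw [hk, he, show f.eval r + p * e * (p * s) + k * (p * s) ^ 2 =
      f.eval r + p ^ 2 * (e * s + k * s ^ 2) by ring, dvd_add_left (dvd_mul_right _ _)]
  rw [liftCount, filter_congr fun s _ => hlift s, filter_const]
  split_ifs <;> simp

end Hensel

namespace Polynomial

variable {R : Type*} [CommRing R] {a b : R[X]} {x : R}

lemma IsCoprime.eval_ne_zero_of_eval_eq_zero [Nontrivial R] (h : IsCoprime a b)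
    (ha : a.eval x = 0) : b.eval x ≠ 0 := by
  simpa [ha] using aeval_ne_zero_of_isCoprime h x

lemma eval_derivative_mul_ne_zero [IsDomain R] (ha : a.Separable) (hx : a.eval x = 0)
    (hb : b.eval x ≠ 0) : (derivative (a * b)).eval x ≠ 0 := by
  rw [derivative_mul, eval_add, eval_mul, eval_mul, hx, zero_mul, add_zero]
  exact mul_ne_zero (IsCoprime.eval_ne_zero_of_eval_eq_zero ha hx) hb

lemma eval_derivative_eq_zero_of_sq_dvd (h : a ^ 2 ∣ b) (hx : a.eval x = 0) :
    (derivative b).eval x = 0 := by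
  obtain ⟨c, rfl⟩ := h
  simp [derivative_mul, derivative_pow, hx]

lemma eval_gcd_eq_zero_iff {K : Type*} [Field K] [DecidableEq K] {a b : K[X]} {x : K} :
    (gcd a b).eval x = 0 ↔ a.eval x = 0 ∧ b.eval x = 0 := by
  simp only [← IsRoot.def, ← dvd_iff_isRoot, _root_.dvd_gcd_iff]

end Polynomial

lemma sq_dvd_iff_dvd_of_sub_eq_mul {R : Type*} [CommRing R] [IsDomain R] {a b c t : R}
    (hc : c ≠ 0) (hb : c ^ 2 ∣ b) (h : a - b = c * t) : c ^ 2 ∣ a ↔ c ∣ t := by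
  rw [← sub_add_cancel a b, h, dvd_add_left hb, pow_two, mul_dvd_mul_iff_left hc]

lemma prod_Icc_one_eq_mul {M : Type*} [CommMonoid M] {ℓ : ℕ} (hℓ : 1 ≤ ℓ) (u : ℕ → M) :
    ∏ i ∈ Icc 1 ℓ, u i = u 1 * ∏ i ∈ Icc 2 ℓ, u i := by
  rw [← insert_Icc_add_one_left_eq_Icc hℓ, prod_insert (by simp)]
  rfl

lemma sq_dvd_eval_iff_of_dvd_eval {R : Type*} [CommRing R] [IsDomain R] {c : R} (hc : c ≠ 0)
    {f G T : R[X]} {L : ℕ → R[X]} {s : Finset ℕ} (hT : f - G * ∏ i ∈ s, L i ^ i = C c * T)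
    {j : ℕ} (hj : j ∈ s) (hj2 : 2 ≤ j) {r : R} (hLj : c ∣ (L j).eval r) :
    c ^ 2 ∣ f.eval r ↔ c ∣ T.eval r := by
  have hprod : c ^ 2 ∣ G.eval r * ∏ i ∈ s, (L i).eval r ^ i :=
    dvd_mul_of_dvd_right ((pow_dvd_pow_of_dvd hLj 2).trans ((pow_dvd_pow _ hj2).trans
      (dvd_prod_of_mem (fun i => (L i).eval r ^ i) hj))) _
  refine sq_dvd_iff_dvd_of_sub_eq_mul hc hprod ?_
  simpa [eval_prod] using congrArg (eval r) hT

section Factorization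

variable {p : ℕ} [Fact p.Prime] {f : ℤ[X]} {ℓ : ℕ} {F : ℕ → (ZMod p)[X]} {g : (ZMod p)[X]}

lemma liftCount_eq_of_factorization (hℓ : 1 ≤ ℓ)
    (hfac : f.map (Int.castRingHom (ZMod p)) = (∏ i ∈ Icc 1 ℓ, F i ^ i) * g)
    (hsep1 : Squarefree (F 1))
    (hcop : ∀ i ∈ Icc 1 ℓ, ∀ j ∈ Icc 1 ℓ, i ≠ j → IsCoprime (F i) (F j))
    (hg : ∀ x, g.eval x ≠ 0) {L : ℕ → ℤ[X]} {G : ℤ[X]}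
    (hL : ∀ i ∈ Icc 1 ℓ, (L i).map (Int.castRingHom (ZMod p)) = F i) {T : ℤ[X]}
    (hT : f - G * ∏ i ∈ Icc 1 ℓ, L i ^ i = C (p : ℤ) * T) (r : ℤ) :
    liftCount p f r = (if (F 1).eval (r : ZMod p) = 0 then 1 else 0) +
      p * (if (∏ i ∈ Icc 2 ℓ, F i).eval (r : ZMod p) = 0 ∧
        (T.map (Int.castRingHom (ZMod p))).eval (r : ZMod p) = 0 then 1 else 0) := by
  set x : ZMod p := (r : ZMod p)
  have hIcc : ∀ i ∈ Icc 2 ℓ, i ∈ Icc 1 ℓ ∧ 1 ≠ i := fun i hi => by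
    simp only [mem_Icc] at hi ⊢; omega
  have hfac' : f.map (Int.castRingHom (ZMod p)) = F 1 * ((∏ i ∈ Icc 2 ℓ, F i ^ i) * g) := by
    rw [hfac, prod_Icc_one_eq_mul hℓ, pow_one, mul_assoc]
  have hcofactor (hF : ∀ i ∈ Icc 2 ℓ, (F i).eval x ≠ 0) :
      ((∏ i ∈ Icc 2 ℓ, F i ^ i) * g).eval x ≠ 0 := by
    rw [eval_mul, eval_prod]
    exact mul_ne_zero (prod_ne_zero_iff.mpr fun i hi => by
      rw [eval_pow]; exact pow_ne_zero _ (hF i hi)) (hg x)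
  by_cases hroot : (F 1).eval x = 0
  · have hF : ∀ i ∈ Icc 2 ℓ, (F i).eval x ≠ 0 := fun i hi =>
      (hcop 1 (by simpa using hℓ) i (hIcc i hi).1 (hIcc i hi).2).eval_ne_zero_of_eval_eq_zero hroot
    have hr : (f.map (Int.castRingHom (ZMod p))).eval x = 0 := by
      rw [hfac', eval_mul, hroot, zero_mul]
    have hd : (derivative (f.map (Int.castRingHom (ZMod p)))).eval x ≠ 0 := by
      rw [hfac']
      exact eval_derivative_mul_ne_zero (PerfectField.separable_iff_squarefree.mpr hsep1)
        hroot (hcofactor hF)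
    have hP : (∏ i ∈ Icc 2 ℓ, F i).eval x ≠ 0 := by rwa [eval_prod, prod_ne_zero_iff]
    simp [liftCount_eq_one hr hd, hroot, hP]
  by_cases hP : (∏ i ∈ Icc 2 ℓ, F i).eval x = 0
  · obtain ⟨j, hj, hFj⟩ := prod_eq_zero_iff.mp (by rwa [eval_prod] at hP)
    have hsq : F j ^ 2 ∣ f.map (Int.castRingHom (ZMod p)) := by
      rw [hfac]
      exact dvd_mul_of_dvd_left ((pow_dvd_pow _ (mem_Icc.mp hj).1).trans
        (dvd_prod_of_mem (fun i => F i ^ i) (hIcc j hj).1)) _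
    have hsq_iff : (p : ℤ) ^ 2 ∣ f.eval r ↔ (T.map (Int.castRingHom (ZMod p))).eval x = 0 := by
      rw [sq_dvd_eval_iff_of_dvd_eval (by exact_mod_cast (Fact.out : p.Prime).ne_zero) hT
        (hIcc j hj).1 (mem_Icc.mp hj).1 (by rwa [intCast_dvd_eval_iff, hL j (hIcc j hj).1]),
        intCast_dvd_eval_iff]
    simp [liftCount_of_eval_derivative_eq_zero (eval_derivative_eq_zero_of_sq_dvd hsq hFj),
      hsq_iff, hroot, hP]
  · have hr : (f.map (Int.castRingHom (ZMod p))).eval x ≠ 0 := by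
      rw [hfac', eval_mul]
      exact mul_ne_zero hroot (hcofactor (prod_ne_zero_iff.mp (by rwa [eval_prod] at hP)))
    simp [liftCount_eq_zero hr, hroot, hP]

end Factorization

theorem stmt14_general (p : ℕ) [Fact p.Prime] (f : Polynomial ℤ)
    (ℓ : ℕ) (hℓ : 1 ≤ ℓ) (F : ℕ → Polynomial (ZMod p)) (g : Polynomial (ZMod p))
    (hfac : f.map (Int.castRingHom (ZMod p)) = (∏ i ∈ Finset.Icc 1 ℓ, F i ^ i) * g)
    (hsep : ∀ i ∈ Finset.Icc 1 ℓ, Squarefree (F i))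
    (hsplit : ∀ i ∈ Finset.Icc 1 ℓ, ((F i).roots.card : ℕ) = (F i).natDegree)
    (hcop : ∀ i ∈ Finset.Icc 1 ℓ, ∀ j ∈ Finset.Icc 1 ℓ, i ≠ j → IsCoprime (F i) (F j))
    (hg : ∀ r : ZMod p, g.eval r ≠ 0)
    (L : ℕ → Polynomial ℤ) (G : Polynomial ℤ)
    (hL : ∀ i ∈ Finset.Icc 1 ℓ, (L i).map (Int.castRingHom (ZMod p)) = F i)
    (T : Polynomial ℤ)
    (hT : f - G * ∏ i ∈ Finset.Icc 1 ℓ, L i ^ i = C (p : ℤ) * T) :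
    ((Finset.range (p ^ 2)).filter (fun a : ℕ => (p : ℤ) ^ 2 ∣ f.eval (a : ℤ))).card =
      (F 1).natDegree +
        p * (gcd (∏ i ∈ Finset.Icc 2 ℓ, F i)
              (T.map (Int.castRingHom (ZMod p)))).natDegree := by
  set P := ∏ i ∈ Icc 2 ℓ, F i
  set D := gcd P (T.map (Int.castRingHom (ZMod p)))
  have hIcc : ∀ i ∈ Icc 2 ℓ, i ∈ Icc 1 ℓ := fun i hi => by simp only [mem_Icc] at hi ⊢; omega
  have h1 : 1 ∈ Icc 1 ℓ := by simpa using hℓ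
  have hsep' : ∀ i ∈ Icc 1 ℓ, (F i).Separable := fun i hi =>
    PerfectField.separable_iff_squarefree.mpr (hsep i hi)
  have hPsep : P.Separable :=
    separable_prod' (fun i hi j hj hij => hcop i (hIcc i hi) j (hIcc j hj) hij)
      fun i hi => hsep' i (hIcc i hi)
  have hPsplit : P.Splits :=
    Splits.prod fun i hi => splits_iff_card_roots.mpr (hsplit i (hIcc i hi))
  calc #{a ∈ range (p ^ 2) | (p : ℤ) ^ 2 ∣ f.eval ((a : ℕ) : ℤ)}
      = ∑ r ∈ range p, liftCount p f r := by
        rw [card_filter_range_sq]; push_cast; rfl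
    _ = ∑ x : ZMod p,
          ((if (F 1).eval x = 0 then 1 else 0) + p * if D.eval x = 0 then 1 else 0) := by
        rw [← sum_range_natCast_eq_sum_zmod]
        refine sum_congr rfl fun r _ => ?_
        rw [liftCount_eq_of_factorization hℓ hfac (hsep 1 h1) hcop hg hL hT]
        simp only [D, P, eval_gcd_eq_zero_iff, Int.cast_natCast]
    _ = (F 1).natDegree + p * D.natDegree := by
        rw [sum_add_distrib, ← mul_sum, ← card_filter, ← card_filter,
          card_filter_eval_eq_zero (hsep' 1 h1) (splits_iff_card_roots.mpr (hsplit 1 h1)),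
          card_filter_eval_eq_zero (hPsep.of_dvd (gcd_dvd_left _ _))
            (hPsplit.of_dvd hPsep.ne_zero (gcd_dvd_left _ _))]

theorem stmt14 (p : ℕ) [Fact p.Prime] (f : Polynomial ℤ) (hf : 0 < f.natDegree)
    (hcoeff : ¬ ∀ n, (p : ℤ) ∣ f.coeff n)
    (ℓ : ℕ) (hℓ : 1 ≤ ℓ) (F : ℕ → Polynomial (ZMod p)) (g : Polynomial (ZMod p))
    (hfac : f.map (Int.castRingHom (ZMod p)) = (∏ i ∈ Finset.Icc 1 ℓ, F i ^ i) * g)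
    (hmonic : ∀ i ∈ Finset.Icc 1 ℓ, (F i).Monic)
    (hsep : ∀ i ∈ Finset.Icc 1 ℓ, Squarefree (F i))
    (hsplit : ∀ i ∈ Finset.Icc 1 ℓ, ((F i).roots.card : ℕ) = (F i).natDegree)
    (hcop : ∀ i ∈ Finset.Icc 1 ℓ, ∀ j ∈ Finset.Icc 1 ℓ, i ≠ j → IsCoprime (F i) (F j))
    (hg : ∀ r : ZMod p, g.eval r ≠ 0)
    (L : ℕ → Polynomial ℤ) (G : Polynomial ℤ)
    (hL : ∀ i ∈ Finset.Icc 1 ℓ, (L i).map (Int.castRingHom (ZMod p)) = F i)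
    (hLcoeff : ∀ i ∈ Finset.Icc 1 ℓ, ∀ n, 0 ≤ (L i).coeff n ∧ (L i).coeff n ≤ (p : ℤ) - 1)
    (hG : G.map (Int.castRingHom (ZMod p)) = g)
    (hGcoeff : ∀ n, 0 ≤ G.coeff n ∧ G.coeff n ≤ (p : ℤ) - 1)
    (T : Polynomial ℤ)
    (hT : f - G * ∏ i ∈ Finset.Icc 1 ℓ, L i ^ i = C (p : ℤ) * T) :
    ((Finset.range (p ^ 2)).filter (fun a : ℕ => (p : ℤ) ^ 2 ∣ f.eval (a : ℤ))).card =
      (F 1).natDegree +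
        p * (gcd (∏ i ∈ Finset.Icc 2 ℓ, F i)
              (T.map (Int.castRingHom (ZMod p)))).natDegree :=
  stmt14_general p f ℓ hℓ F g hfac hsep hsplit hcop hg L G hL T hT
end

section
/- With the setup of the main theorem, exactly deg(f₂···f_ℓ) − deg(h₂) degenerate roots of f mod p fail to lift to roots of f mod p²; i.e., #{a ∈ {0,...,p−1} : (f₂···f_ℓ)(ā) = 0 in ℤ/pℤ and f(a) ≢ 0 mod p²} = deg(f₂···f_ℓ) − deg(h₂). -/
/-!
Write `P = f₂ ⋯ f_ℓ`. If `a` is a root of `P` mod `p`, it is a root of some `fᵢ` with `i ≥ 2`, so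
`p²` divides `g̃(a) ∏ ℒᵢ(a)^i`, and `f(a) = g̃(a) ∏ ℒᵢ(a)^i + p t(a)` is divisible by `p²` exactly
when `t(a) ≡ 0 mod p`. Hence the roots of `P` that do not lift are those of `P` that are not roots
of `t`. Since `P` is separable and split, its roots number `deg P`, and those shared with `t` are
the roots of the separable, split divisor `gcd(P, t)`, which number `deg gcd(P, t)`.
-/

open Polynomial Finset

namespace Polynomial

variable {K : Type*} [Field K] [DecidableEq K]

theorem isRoot_gcd_iff {P Q : K[X]} {r : K} : (gcd P Q).IsRoot r ↔ P.IsRoot r ∧ Q.IsRoot r := by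
  simp only [← dvd_iff_isRoot, _root_.dvd_gcd_iff]

theorem Separable.card_roots_toFinset {P : K[X]} (hsep : P.Separable)
    (hsplit : P.Splits) : P.roots.toFinset.card = P.natDegree := by
  rw [Multiset.toFinset_card_of_nodup (nodup_roots hsep), hsplit.natDegree_eq_card_roots]

theorem Separable.card_roots_filter_not_isRoot {P : K[X]} (Q : K[X])
    (hsep : P.Separable) (hsplit : P.Splits) :
    (P.roots.toFinset.filter fun r => ¬ Q.IsRoot r).card = P.natDegree - (gcd P Q).natDegree := by
  have hgcd_sep : (gcd P Q).Separable := hsep.of_dvd (gcd_dvd_left P Q)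
  have hgcd_split : (gcd P Q).Splits := hsplit.of_dvd hsep.ne_zero (gcd_dvd_left P Q)
  have hcommon : P.roots.toFinset.filter Q.IsRoot = (gcd P Q).roots.toFinset := by
    ext r
    simp only [mem_filter, Multiset.mem_toFinset, mem_roots hsep.ne_zero,
      mem_roots hgcd_sep.ne_zero, isRoot_gcd_iff]
  have hcount := card_filter_add_card_filter_not (s := P.roots.toFinset) Q.IsRoot
  rw [hcommon, hgcd_sep.card_roots_toFinset hgcd_split, hsep.card_roots_toFinset hsplit]
    at hcount
  omega

end Polynomial

theorem ZMod.card_filter_range_natCast (n : ℕ) [NeZero n] (S : ZMod n → Prop) [DecidablePred S] :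
    ((range n).filter fun a : ℕ => S a).card = (univ.filter S).card := by
  refine card_nbij' Nat.cast ZMod.val ?_ ?_ ?_ ?_
  · intro a ha
    simpa using (mem_filter.mp ha).2
  · intro r hr
    simpa [ZMod.val_lt] using hr
  · intro a ha
    exact ZMod.val_natCast_of_lt (mem_range.mp (mem_filter.mp ha).1)
  · intro r _
    exact ZMod.natCast_zmod_val r

theorem sq_dvd_prod_pow {M : Type*} [CommMonoid M] {s : Finset ℕ} {x : ℕ → M} {q : M} {i : ℕ}
    (hi : i ∈ s) (h2 : 2 ≤ i) (hq : q ∣ x i) : q ^ 2 ∣ ∏ j ∈ s, x j ^ j :=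
  (pow_dvd_pow_of_dvd hq 2).trans ((pow_dvd_pow _ h2).trans (dvd_prod_of_mem _ hi))

theorem Int.sq_dvd_iff_dvd_of_sub_eq_mul {p x y t : ℤ} (hp : p ≠ 0) (hxy : x - y = p * t)
    (hy : p ^ 2 ∣ y) : p ^ 2 ∣ x ↔ p ∣ t := by
  rw [show x = y + p * t by linarith, dvd_add_right hy, sq, mul_dvd_mul_iff_left hp]

theorem sq_dvd_eval_iff_isRoot_map {p : ℕ} [NeZero p] {f G T : ℤ[X]} {L : ℕ → ℤ[X]}
    {s : Finset ℕ} (hT : f - G * ∏ i ∈ s, L i ^ i = C (p : ℤ) * T) {a : ℤ} {i : ℕ} (hi : i ∈ s)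
    (h2 : 2 ≤ i) (ha : ((L i).map (Int.castRingHom (ZMod p))).IsRoot (a : ZMod p)) :
    (p : ℤ) ^ 2 ∣ f.eval a ↔ (T.map (Int.castRingHom (ZMod p))).IsRoot (a : ZMod p) := by
  have hLa : (p : ℤ) ∣ (L i).eval a := by
    rwa [IsRoot, eval_intCast_map, eq_intCast, ZMod.intCast_zmod_eq_zero_iff_dvd] at ha
  have hprod : (p : ℤ) ^ 2 ∣ (G * ∏ j ∈ s, L j ^ j).eval a := by
    rw [eval_mul, eval_prod]
    simp only [eval_pow]
    exact (sq_dvd_prod_pow hi h2 hLa).mul_left _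
  have hsub : f.eval a - (G * ∏ j ∈ s, L j ^ j).eval a = p * T.eval a := by
    rw [← eval_sub, hT, eval_mul, eval_C]
  rw [Int.sq_dvd_iff_dvd_of_sub_eq_mul (by exact_mod_cast NeZero.ne p) hsub hprod, IsRoot,
    eval_intCast_map, eq_intCast, ZMod.intCast_zmod_eq_zero_iff_dvd, Int.cast_id]

theorem stmt15_general (p : ℕ) [Fact p.Prime] (f : Polynomial ℤ)
    (ℓ : ℕ) (F : ℕ → Polynomial (ZMod p))
    (hsep : ∀ i ∈ Finset.Icc 1 ℓ, Squarefree (F i))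
    (hsplit : ∀ i ∈ Finset.Icc 1 ℓ, ((F i).roots.card : ℕ) = (F i).natDegree)
    (hcop : ∀ i ∈ Finset.Icc 1 ℓ, ∀ j ∈ Finset.Icc 1 ℓ, i ≠ j → IsCoprime (F i) (F j))
    (L : ℕ → Polynomial ℤ) (G : Polynomial ℤ)
    (hL : ∀ i ∈ Finset.Icc 1 ℓ, (L i).map (Int.castRingHom (ZMod p)) = F i)
    (T : Polynomial ℤ)
    (hT : f - G * ∏ i ∈ Finset.Icc 1 ℓ, L i ^ i = C (p : ℤ) * T) :
    ((Finset.range p).filter (fun a : ℕ =>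
        (∏ i ∈ Finset.Icc 2 ℓ, F i).eval ((a : ℤ) : ZMod p) = 0 ∧
          ¬ (p : ℤ) ^ 2 ∣ f.eval (a : ℤ))).card =
      (∏ i ∈ Finset.Icc 2 ℓ, F i).natDegree -
        (gcd (∏ i ∈ Finset.Icc 2 ℓ, F i)
          (T.map (Int.castRingHom (ZMod p)))).natDegree := by
  set P := ∏ i ∈ Icc 2 ℓ, F i
  set Tp := T.map (Int.castRingHom (ZMod p))
  have hsub : Icc 2 ℓ ⊆ Icc 1 ℓ := Icc_subset_Icc_left (by norm_num)
  have hPsep : P.Separable :=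
    separable_prod' (fun i hi j hj => hcop i (hsub hi) j (hsub hj))
      fun i hi => PerfectField.separable_iff_squarefree.mpr (hsep i (hsub hi))
  have hPsplit : P.Splits := Splits.prod fun i hi => splits_iff_card_roots.mpr (hsplit i (hsub hi))
  have hlift (a : ℤ) (ha : P.IsRoot a) : (p : ℤ) ^ 2 ∣ f.eval a ↔ Tp.IsRoot a := by
    obtain ⟨i, hi, hFi⟩ := prod_eq_zero_iff.mp (by rwa [IsRoot, eval_prod] at ha)
    rw [← hL i (hsub hi)] at hFi
    exact sq_dvd_eval_iff_isRoot_map hT (hsub hi) (mem_Icc.mp hi).1 hFi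
  calc _ = ((range p).filter fun a : ℕ =>
        P.IsRoot ((a : ℤ) : ZMod p) ∧ ¬ Tp.IsRoot ((a : ℤ) : ZMod p)).card :=
        congrArg card <| filter_congr fun a _ => and_congr_right fun ha => not_congr (hlift a ha)
    _ = (univ.filter fun r : ZMod p => P.IsRoot r ∧ ¬ Tp.IsRoot r).card := by
        simp only [Int.cast_natCast]
        exact ZMod.card_filter_range_natCast p fun r => P.IsRoot r ∧ ¬ Tp.IsRoot r
    _ = (P.roots.toFinset.filter fun r => ¬ Tp.IsRoot r).card := by
        congr 1
        ext r
        simp [mem_roots hPsep.ne_zero]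
    _ = _ := hPsep.card_roots_filter_not_isRoot Tp hPsplit

theorem stmt15 (p : ℕ) [Fact p.Prime] (f : Polynomial ℤ) (hf : 0 < f.natDegree)
    (hcoeff : ¬ ∀ n, (p : ℤ) ∣ f.coeff n)
    (ℓ : ℕ) (hℓ : 1 ≤ ℓ) (F : ℕ → Polynomial (ZMod p)) (g : Polynomial (ZMod p))
    (hfac : f.map (Int.castRingHom (ZMod p)) = (∏ i ∈ Finset.Icc 1 ℓ, F i ^ i) * g)
    (hmonic : ∀ i ∈ Finset.Icc 1 ℓ, (F i).Monic)
    (hsep : ∀ i ∈ Finset.Icc 1 ℓ, Squarefree (F i))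
    (hsplit : ∀ i ∈ Finset.Icc 1 ℓ, ((F i).roots.card : ℕ) = (F i).natDegree)
    (hcop : ∀ i ∈ Finset.Icc 1 ℓ, ∀ j ∈ Finset.Icc 1 ℓ, i ≠ j → IsCoprime (F i) (F j))
    (hg : ∀ r : ZMod p, g.eval r ≠ 0)
    (L : ℕ → Polynomial ℤ) (G : Polynomial ℤ)
    (hL : ∀ i ∈ Finset.Icc 1 ℓ, (L i).map (Int.castRingHom (ZMod p)) = F i)
    (hLcoeff : ∀ i ∈ Finset.Icc 1 ℓ, ∀ n, 0 ≤ (L i).coeff n ∧ (L i).coeff n ≤ (p : ℤ) - 1)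
    (hG : G.map (Int.castRingHom (ZMod p)) = g)
    (hGcoeff : ∀ n, 0 ≤ G.coeff n ∧ G.coeff n ≤ (p : ℤ) - 1)
    (T : Polynomial ℤ)
    (hT : f - G * ∏ i ∈ Finset.Icc 1 ℓ, L i ^ i = C (p : ℤ) * T) :
    ((Finset.range p).filter (fun a : ℕ =>
        (∏ i ∈ Finset.Icc 2 ℓ, F i).eval ((a : ℤ) : ZMod p) = 0 ∧
          ¬ (p : ℤ) ^ 2 ∣ f.eval (a : ℤ))).card =
      (∏ i ∈ Finset.Icc 2 ℓ, F i).natDegree -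
        (gcd (∏ i ∈ Finset.Icc 2 ℓ, F i)
          (T.map (Int.castRingHom (ZMod p)))).natDegree :=
  stmt15_general p f ℓ F hsep hsplit hcop L G hL T hT
end

section
/- Let f ∈ ℤ[x] be nonconstant with not all coefficients divisible by p. Then the number of roots of f mod p² in ℤ/p²ℤ is at least n₁ and at most n₁ + p·n₂, where n₁ is the number of simple roots and n₂ the number of degenerate roots of f mod p in ℤ/pℤ. -/
/-!
Reduction `ℤ/p²ℤ → ℤ/pℤ` sends roots of `f` to roots of `f`, so the roots mod `p²` split into
fibres over the roots mod `p`. The kernel of the reduction consists of nilpotents (its elements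
square to zero), so Newton–Hensel lifting
(`Polynomial.existsUnique_nilpotent_sub_and_aeval_eq_zero`) gives exactly one root above each
simple root. Above a degenerate root there are at most as many roots as the whole fibre of the
reduction has elements, namely `p`.
-/

open Polynomial Finset

theorem isUnit_of_isUnit_map_of_ker_isNilpotent {R S : Type*} [CommRing R] [CommRing S]
    {φ : R →+* S} (hφ : Function.Surjective φ) (hker : ∀ x, φ x = 0 → IsNilpotent x) {x : R}
    (hx : IsUnit (φ x)) : IsUnit x := by
  obtain ⟨y, hy⟩ := hφ ↑hx.unit⁻¹
  have hxy : IsNilpotent (x * y - 1) := hker _ (by simp [hy])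
  have : IsUnit (x * y) := by simpa using hxy.isUnit_add_one
  exact isUnit_of_mul_isUnit_left this

theorem aeval_intCast_zmod (n : ℕ) (f : ℤ[X]) (a : ℤ) :
    aeval (a : ZMod n) f = ((f.eval a : ℤ) : ZMod n) := by
  simpa using aeval_algHom_apply (Int.castRingHom (ZMod n)).toIntAlgHom a f

theorem card_filter_range_dvd_eval_eq_card_roots_zmod (n : ℕ) [NeZero n] (f : ℤ[X]) :
    #((range n).filter fun a : ℕ => (n : ℤ) ∣ f.eval (a : ℤ)) = #{x : ZMod n | aeval x f = 0} := by
  refine card_nbij' (fun a => (a : ZMod n)) ZMod.val ?_ ?_ ?_ ?_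
  · intro a ha
    rw [mem_coe, mem_filter, mem_range] at ha
    rw [mem_coe, mem_filter]
    refine ⟨mem_univ _, ?_⟩
    dsimp only
    rw [← Int.cast_natCast, aeval_intCast_zmod, ZMod.intCast_zmod_eq_zero_iff_dvd]
    exact ha.2
  · intro x hx
    rw [mem_coe, mem_filter] at hx
    rw [mem_coe, mem_filter, mem_range, ← ZMod.intCast_zmod_eq_zero_iff_dvd, ← aeval_intCast_zmod,
      Int.cast_natCast, ZMod.natCast_zmod_val]
    exact ⟨ZMod.val_lt x, hx.2⟩
  · intro a ha
    exact ZMod.val_cast_of_lt (mem_range.mp (mem_filter.mp ha).1)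
  · intro x _
    exact ZMod.natCast_zmod_val x

section SquareOfPrime

variable {p : ℕ}

local notation "π" => ZMod.castHom (dvd_pow_self p two_ne_zero) (ZMod p)

theorem aeval_castHom (f : ℤ[X]) (x : ZMod (p ^ 2)) : aeval (π x) f = π (aeval x f) :=
  aeval_algHom_apply (π).toIntAlgHom x f

theorem sq_eq_zero_of_castHom_eq_zero [NeZero p] {x : ZMod (p ^ 2)} (hx : π x = 0) :
    x ^ 2 = 0 := by
  rw [← ZMod.natCast_zmod_val x, map_natCast, ZMod.natCast_eq_zero_iff] at hx
  obtain ⟨s, hs⟩ := hx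
  rw [← ZMod.natCast_zmod_val x, hs]
  push_cast
  rw [mul_pow, ← Nat.cast_pow, ZMod.natCast_self, zero_mul]

variable [Fact p.Prime]

theorem isNilpotent_iff_castHom_eq_zero {x : ZMod (p ^ 2)} : IsNilpotent x ↔ π x = 0 :=
  ⟨fun hx => (hx.map π).eq_zero, fun hx => ⟨2, sq_eq_zero_of_castHom_eq_zero hx⟩⟩

theorem isUnit_of_castHom_ne_zero {x : ZMod (p ^ 2)} (hx : π x ≠ 0) : IsUnit x :=
  isUnit_of_isUnit_map_of_ker_isNilpotent (ZMod.ringHom_surjective _)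
    (fun _ => isNilpotent_iff_castHom_eq_zero.mpr) hx.isUnit

theorem card_castHom_fiber (r : ZMod p) : #{x : ZMod (p ^ 2) | π x = r} = p := by
  have hsurj := ZMod.ringHom_surjective π
  have hfib : ∀ s, #{x : ZMod (p ^ 2) | π x = s} = #{x : ZMod (p ^ 2) | π x = r} := fun s =>
    AddMonoidHom.card_fiber_eq_of_mem_range (π).toAddMonoidHom (hsurj s) (hsurj r)
  have hcard := card_eq_sum_card_fiberwise (f := π) (s := univ) (t := univ)
    (fun _ _ => mem_coe.2 (mem_univ _))
  rw [card_univ, ZMod.card, sum_congr rfl (fun s _ => hfib s), sum_const, card_univ, ZMod.card,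
    smul_eq_mul] at hcard
  exact Nat.eq_of_mul_eq_mul_left (Fact.out : p.Prime).pos (hcard.symm.trans (sq p))

theorem existsUnique_castHom_eq_and_aeval_eq_zero {f : ℤ[X]} {r : ZMod p} (hr : aeval r f = 0)
    (hr' : aeval r (derivative f) ≠ 0) : ∃! x : ZMod (p ^ 2), π x = r ∧ aeval x f = 0 := by
  obtain ⟨x₀, rfl⟩ := ZMod.ringHom_surjective π r
  rw [aeval_castHom] at hr hr'
  have hlift := existsUnique_nilpotent_sub_and_aeval_eq_zero
    (isNilpotent_iff_castHom_eq_zero.mpr hr) (isUnit_of_castHom_ne_zero hr')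
  simpa only [isNilpotent_iff_castHom_eq_zero, map_sub, sub_eq_zero, @eq_comm _ (π x₀)] using hlift

theorem card_roots_castHom_simple (f : ℤ[X]) :
    #{x : ZMod (p ^ 2) | aeval x f = 0 ∧ aeval (π x) (derivative f) ≠ 0} =
      #{r : ZMod p | aeval r f = 0 ∧ aeval r (derivative f) ≠ 0} := by
  refine card_bij (fun x _ => π x) ?_ ?_ ?_
  · intro x hx
    rw [mem_filter] at hx ⊢
    exact ⟨mem_univ _, by rw [aeval_castHom, hx.2.1, map_zero], hx.2.2⟩
  · intro x hx y hy hxy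
    rw [mem_filter] at hx hy
    exact (existsUnique_castHom_eq_and_aeval_eq_zero (by rw [aeval_castHom, hx.2.1, map_zero])
      hx.2.2).unique ⟨rfl, hx.2.1⟩ ⟨hxy.symm, hy.2.1⟩
  · intro r hr
    rw [mem_filter] at hr
    obtain ⟨x, ⟨rfl, hx⟩, -⟩ := existsUnique_castHom_eq_and_aeval_eq_zero hr.2.1 hr.2.2
    exact ⟨x, mem_filter.mpr ⟨mem_univ _, hx, hr.2.2⟩, rfl⟩

theorem card_roots_castHom_degenerate_le (f : ℤ[X]) :
    #{x : ZMod (p ^ 2) | aeval x f = 0 ∧ aeval (π x) (derivative f) = 0} ≤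
      p * #{r : ZMod p | aeval r f = 0 ∧ aeval r (derivative f) = 0} := by
  refine card_le_mul_card_image_of_maps_to (f := π) ?_ p ?_
  · intro x hx
    rw [mem_filter] at hx ⊢
    exact ⟨mem_univ _, by rw [aeval_castHom, hx.2.1, map_zero], hx.2.2⟩
  · intro r _
    exact (card_le_card (filter_subset_filter _ (subset_univ _))).trans (card_castHom_fiber r).le

end SquareOfPrime

theorem stmt18_general (p : ℕ) (hp : p.Prime) (f : Polynomial ℤ) :
    let N := ((Finset.range (p ^ 2)).filter
        (fun a : ℕ => (p : ℤ) ^ 2 ∣ f.eval (a : ℤ))).card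
    let n₁ := {r : ZMod p | Polynomial.aeval r f = 0 ∧
        Polynomial.aeval r f.derivative ≠ 0}.ncard
    let n₂ := {r : ZMod p | Polynomial.aeval r f = 0 ∧
        Polynomial.aeval r f.derivative = 0}.ncard
    n₁ ≤ N ∧ N ≤ n₁ + p * n₂ := by
  intro N n₁ n₂
  have := Fact.mk hp
  have hN : N = #{x : ZMod (p ^ 2) | aeval x f = 0} := by
    exact_mod_cast card_filter_range_dvd_eval_eq_card_roots_zmod (p ^ 2) f
  rw [← card_filter_add_card_filter_not
    (fun x => aeval (ZMod.castHom (dvd_pow_self p two_ne_zero) (ZMod p) x) (derivative f) ≠ 0),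
    filter_filter, filter_filter] at hN
  simp_rw [not_not] at hN
  have h₁ : n₁ = #{r : ZMod p | aeval r f = 0 ∧ aeval r (derivative f) ≠ 0} := by
    simp [n₁, Set.ncard_eq_toFinset_card']
  have h₂ : n₂ = #{r : ZMod p | aeval r f = 0 ∧ aeval r (derivative f) = 0} := by
    simp [n₂, Set.ncard_eq_toFinset_card']
  rw [hN, h₁, h₂, ← card_roots_castHom_simple f]
  exact ⟨Nat.le_add_right _ _, Nat.add_le_add_left (card_roots_castHom_degenerate_le f) _⟩

theorem stmt18 (p : ℕ) (hp : p.Prime) (f : Polynomial ℤ)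
    (hf : 0 < f.natDegree)
    (hcoeff : ¬ ∀ n, (p : ℤ) ∣ f.coeff n) :
    let N := ((Finset.range (p ^ 2)).filter
        (fun a : ℕ => (p : ℤ) ^ 2 ∣ f.eval (a : ℤ))).card
    let n₁ := {r : ZMod p | Polynomial.aeval r f = 0 ∧
        Polynomial.aeval r f.derivative ≠ 0}.ncard
    let n₂ := {r : ZMod p | Polynomial.aeval r f = 0 ∧
        Polynomial.aeval r f.derivative = 0}.ncard
    n₁ ≤ N ∧ N ≤ n₁ + p * n₂ :=
  stmt18_general p hp f
end
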